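/- Consider one step of gradient descent on L(W₁,W₂) = ℓ(W₁W₂ᵀ): W₁⁺ = W₁ − η ∇ℓ(W)W₂ and W₂⁺ = W₂ − η ∇ℓ(W)ᵀW₁, where W = W₁W₂ᵀ. Then the imbalance D = W₁ᵀW₁ − W₂ᵀW₂ evolves as D⁺ − D = η² (W₂ᵀ∇ℓ(W)ᵀ∇ℓ(W)W₂ − W₁ᵀ∇ℓ(W)ᵀ∇ℓ(W)W₁). In particular, ‖D⁺ − D‖_F ≤ η² (σ_max(W₁)² + σ_max(W₂)²) ‖∇ℓ(W)‖_F². -/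

import Mathlib

open Matrix

/-- Frobenius norm of a real matrix. -/
noncomputable def fro {a b : ℕ} (A : Matrix (Fin a) (Fin b) ℝ) : ℝ :=
  Real.sqrt (∑ i, ∑ j, (A i j) ^ 2)

/-- Frobenius (trace) inner product of two real matrices. -/
noncomputable def ip {a b : ℕ} (A B : Matrix (Fin a) (Fin b) ℝ) : ℝ :=
  ∑ i, ∑ j, A i j * B i j

/-- Square of the largest singular value of `A`: largest eigenvalue of `Aᴴ * A`. -/
noncomputable def smaxSq {a b : ℕ} (A : Matrix (Fin a) (Fin b) ℝ) : ℝ :=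
  ⨆ i, (Matrix.isHermitian_conjTranspose_mul_self A).eigenvalues i

/-- Square of the smallest singular value of `A` (as the smallest eigenvalue of `Aᴴ * A`;
zero when `A` is rank-deficient as a map out of its column space). -/
noncomputable def sminSq {a b : ℕ} (A : Matrix (Fin a) (Fin b) ℝ) : ℝ :=
  ⨅ i, (Matrix.isHermitian_conjTranspose_mul_self A).eigenvalues i

/-- Square of the largest singular value via `A * Aᴴ`. -/
noncomputable def smaxSqR {a b : ℕ} (A : Matrix (Fin a) (Fin b) ℝ) : ℝ :=
  ⨆ i, (Matrix.isHermitian_mul_conjTranspose_self A).eigenvalues i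

/-- Square of the smallest singular value via `A * Aᴴ` (the `min(a,b)`-th singular value
when `a ≤ b`). -/
noncomputable def sminSqR {a b : ℕ} (A : Matrix (Fin a) (Fin b) ℝ) : ℝ :=
  ⨅ i, (Matrix.isHermitian_mul_conjTranspose_self A).eigenvalues i

/-- Largest singular value. -/
noncomputable def smax {a b : ℕ} (A : Matrix (Fin a) (Fin b) ℝ) : ℝ :=
  Real.sqrt (smaxSq A)

/-!
Expanding the Gram matrices of the updated factors, the first-order term
`-η (W₁ᵀ G W₂ + W₂ᵀ Gᵀ W₁)` is the same in `W₁⁺ᵀ W₁⁺` and in `W₂⁺ᵀ W₂⁺`, so only the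
`η²` terms `(G W₂)ᵀ (G W₂)` and `(Gᵀ W₁)ᵀ (Gᵀ W₁)` survive in `D⁺ - D`. A term `(X W)ᵀ (X W)` has
Frobenius norm at most `‖X W‖_F² ≤ ‖X‖_F² ‖W‖₂²` (row by row, with the spectral norm `‖W‖₂`),
and `‖W‖₂² = ‖Wᵀ W‖₂` is the largest eigenvalue of `Wᵀ W` because the operator norm is invariant
under the unitary conjugation diagonalizing `Wᵀ W`.
-/

def imbalance {R ι κ μ : Type*} [CommRing R] [Fintype ι] [Fintype κ] (W₁ : Matrix ι μ R)
    (W₂ : Matrix κ μ R) : Matrix μ μ R :=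
  W₁ᵀ * W₁ - W₂ᵀ * W₂

section L2OpNorm

open scoped Matrix.Norms.L2Operator

theorem smaxSq_eq_l2_opNorm_sq {a b : ℕ} (A : Matrix (Fin a) (Fin b) ℝ) :
    smaxSq A = ‖A‖ ^ 2 := by
  have hM := isHermitian_conjTranspose_mul_self A
  have hev : ‖hM.eigenvalues‖ = ‖Aᴴ * A‖ := by
    conv_rhs => rw [hM.spectral_theorem, Unitary.conjStarAlgAut_apply,
      ← Unitary.coe_star, CStarRing.norm_mul_coe_unitary,
      CStarRing.norm_coe_unitary_mul, l2_opNorm_diagonal]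
    rfl
  have habs (i : Fin b) : ‖hM.eigenvalues i‖ = hM.eigenvalues i :=
    Real.norm_of_nonneg (eigenvalues_conjTranspose_mul_self_nonneg A i)
  rw [sq, ← l2_opNorm_conjTranspose_mul_self, ← hev]
  refine le_antisymm (Real.iSup_le (fun i => ?_) (norm_nonneg _)) ?_
  · exact habs i ▸ norm_le_pi_norm hM.eigenvalues i
  · refine (pi_norm_le_iff_of_nonneg (Real.iSup_nonneg fun i => ?_)).2 fun i => ?_
    · exact eigenvalues_conjTranspose_mul_self_nonneg A i
    · rw [habs]; exact le_ciSup (Set.finite_range _).bddAbove i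

theorem l2_opNorm_vecMul_le {m n : Type*} [Fintype m] [Fintype n] [DecidableEq m] [DecidableEq n]
    (A : Matrix m n ℝ) (x : m → ℝ) :
    ‖WithLp.toLp 2 (x ᵥ* A)‖ ≤ ‖A‖ * ‖WithLp.toLp 2 x‖ := by
  simpa [← mulVec_transpose, ← conjTranspose_eq_transpose_of_trivial, l2_opNorm_conjTranspose]
    using l2_opNorm_mulVec Aᴴ (WithLp.toLp 2 x)

theorem fro_eq_sqrt_sum_norm_row_sq {p q : ℕ} (X : Matrix (Fin p) (Fin q) ℝ) :
    fro X = √(∑ i, ‖WithLp.toLp 2 (X i)‖ ^ 2) := by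
  simp [fro, EuclideanSpace.norm_sq_eq]

theorem fro_mul_le_fro_mul_l2_opNorm {p q r : ℕ} (B : Matrix (Fin p) (Fin q) ℝ)
    (A : Matrix (Fin q) (Fin r) ℝ) : fro (B * A) ≤ fro B * ‖A‖ := by
  rw [fro_eq_sqrt_sum_norm_row_sq, fro_eq_sqrt_sum_norm_row_sq, ← Real.sqrt_sq (norm_nonneg A),
    ← Real.sqrt_mul (Finset.sum_nonneg fun _ _ => sq_nonneg _), Finset.sum_mul]
  refine Real.sqrt_le_sqrt (Finset.sum_le_sum fun i _ => ?_)
  rw [← mul_pow, mul_comm]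
  exact pow_le_pow_left₀ (norm_nonneg _) (l2_opNorm_vecMul_le A (B i)) 2

theorem fro_mul_sq_le_smaxSq_mul {p q r : ℕ} (B : Matrix (Fin p) (Fin q) ℝ)
    (A : Matrix (Fin q) (Fin r) ℝ) : fro (B * A) ^ 2 ≤ smaxSq A * fro B ^ 2 := by
  rw [smaxSq_eq_l2_opNorm_sq, ← mul_pow, mul_comm]
  exact pow_le_pow_left₀ (Real.sqrt_nonneg _) (fro_mul_le_fro_mul_l2_opNorm B A) 2

end L2OpNorm

section Frobenius

attribute [local instance] Matrix.frobeniusSeminormedAddCommGroup Matrix.frobeniusNormedSpace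

theorem fro_eq_frobenius_norm {a b : ℕ} (A : Matrix (Fin a) (Fin b) ℝ) : fro A = ‖A‖ := by
  rw [fro, frobenius_norm_def, ← Real.sqrt_eq_rpow]
  simp only [Real.norm_eq_abs, Real.rpow_two, sq_abs]

theorem fro_transpose_mul_self_le {a b : ℕ} (A : Matrix (Fin a) (Fin b) ℝ) :
    fro (Aᵀ * A) ≤ fro A ^ 2 := by
  simpa [fro_eq_frobenius_norm, frobenius_norm_transpose, sq] using frobenius_norm_mul Aᵀ A

theorem fro_transpose {a b : ℕ} (A : Matrix (Fin a) (Fin b) ℝ) : fro Aᵀ = fro A := by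
  rw [fro_eq_frobenius_norm, fro_eq_frobenius_norm, frobenius_norm_transpose]

theorem fro_smul_sub_le {a b : ℕ} (c : ℝ) (A B : Matrix (Fin a) (Fin b) ℝ) :
    fro (c • (A - B)) ≤ |c| * (fro A + fro B) := by
  simp only [fro_eq_frobenius_norm, norm_smul, Real.norm_eq_abs]
  exact mul_le_mul_of_nonneg_left (norm_sub_le A B) (abs_nonneg c)

end Frobenius

theorem imbalance_gdStep_sub_imbalance {R ι κ μ : Type*} [CommRing R] [Fintype ι] [Fintype κ]
    (η : R) (G : Matrix ι κ R) (W₁ : Matrix ι μ R) (W₂ : Matrix κ μ R) :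
    imbalance (W₁ - η • (G * W₂)) (W₂ - η • (Gᵀ * W₁)) - imbalance W₁ W₂
      = η ^ 2 • (W₂ᵀ * Gᵀ * G * W₂ - W₁ᵀ * G * Gᵀ * W₁) := by
  simp only [imbalance, transpose_sub, transpose_smul, transpose_mul, transpose_transpose,
    Matrix.sub_mul, Matrix.mul_sub, smul_sub, Matrix.smul_mul, Matrix.mul_smul, smul_smul,
    Matrix.mul_assoc]
  module

theorem fro_smul_imbalance_increment_le {n m h : ℕ} (η : ℝ) (G : Matrix (Fin n) (Fin m) ℝ)
    (W₁ : Matrix (Fin n) (Fin h) ℝ) (W₂ : Matrix (Fin m) (Fin h) ℝ) :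
    fro (η ^ 2 • (W₂ᵀ * Gᵀ * G * W₂ - W₁ᵀ * G * Gᵀ * W₁))
      ≤ η ^ 2 * (smaxSq W₁ + smaxSq W₂) * fro G ^ 2 := by
  have hGW₂ : W₂ᵀ * Gᵀ * G * W₂ = (G * W₂)ᵀ * (G * W₂) := by
    simp only [transpose_mul, Matrix.mul_assoc]
  have hGW₁ : W₁ᵀ * G * Gᵀ * W₁ = (Gᵀ * W₁)ᵀ * (Gᵀ * W₁) := by
    simp only [transpose_mul, transpose_transpose, Matrix.mul_assoc]
  calc fro (η ^ 2 • (W₂ᵀ * Gᵀ * G * W₂ - W₁ᵀ * G * Gᵀ * W₁))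
      ≤ |η ^ 2| * (fro ((G * W₂)ᵀ * (G * W₂)) + fro ((Gᵀ * W₁)ᵀ * (Gᵀ * W₁))) := by
        rw [hGW₂, hGW₁]
        exact fro_smul_sub_le _ _ _
    _ ≤ η ^ 2 * (fro (G * W₂) ^ 2 + fro (Gᵀ * W₁) ^ 2) := by
        rw [abs_sq]
        gcongr <;> exact fro_transpose_mul_self_le _
    _ ≤ η ^ 2 * (smaxSq W₂ * fro G ^ 2 + smaxSq W₁ * fro Gᵀ ^ 2) := by
        gcongr <;> exact fro_mul_sq_le_smaxSq_mul _ _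
    _ = η ^ 2 * (smaxSq W₁ + smaxSq W₂) * fro G ^ 2 := by
        rw [fro_transpose]; ring

theorem stmt11_general (n m h : ℕ) (η : ℝ)
    (W₁ : Matrix (Fin n) (Fin h) ℝ) (W₂ : Matrix (Fin m) (Fin h) ℝ)
    (G : Matrix (Fin n) (Fin m) ℝ)
    (W₁' : Matrix (Fin n) (Fin h) ℝ) (hW₁' : W₁' = W₁ - η • (G * W₂))
    (W₂' : Matrix (Fin m) (Fin h) ℝ) (hW₂' : W₂' = W₂ - η • (Gᵀ * W₁)) :
    (W₁'ᵀ * W₁' - W₂'ᵀ * W₂') - (W₁ᵀ * W₁ - W₂ᵀ * W₂)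
      = η ^ 2 • (W₂ᵀ * Gᵀ * G * W₂ - W₁ᵀ * G * Gᵀ * W₁) ∧
    fro ((W₁'ᵀ * W₁' - W₂'ᵀ * W₂') - (W₁ᵀ * W₁ - W₂ᵀ * W₂))
      ≤ η ^ 2 * (smaxSq W₁ + smaxSq W₂) * fro G ^ 2 := by
  subst hW₁' hW₂'
  have hstep := imbalance_gdStep_sub_imbalance η G W₁ W₂
  exact ⟨hstep, hstep ▸ fro_smul_imbalance_increment_le η G W₁ W₂⟩

/-- One GD step on `L(W₁,W₂) = ℓ(W₁W₂ᵀ)`: with `G = ∇ℓ(W₁W₂ᵀ)`,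
`W₁⁺ = W₁ − ηGW₂`, `W₂⁺ = W₂ − ηGᵀW₁`, the imbalance `D = W₁ᵀW₁ − W₂ᵀW₂` satisfies
`D⁺ − D = η²(W₂ᵀGᵀGW₂ − W₁ᵀGGᵀW₁)` and
`‖D⁺ − D‖_F ≤ η²(σ_max(W₁)² + σ_max(W₂)²)‖G‖_F²`. -/
theorem stmt11 (n m h : ℕ) (η : ℝ)
    (g : Matrix (Fin n) (Fin m) ℝ → Matrix (Fin n) (Fin m) ℝ)
    (W₁ : Matrix (Fin n) (Fin h) ℝ) (W₂ : Matrix (Fin m) (Fin h) ℝ)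
    (G : Matrix (Fin n) (Fin m) ℝ) (hG : G = g (W₁ * W₂ᵀ))
    (W₁' : Matrix (Fin n) (Fin h) ℝ) (hW₁' : W₁' = W₁ - η • (G * W₂))
    (W₂' : Matrix (Fin m) (Fin h) ℝ) (hW₂' : W₂' = W₂ - η • (Gᵀ * W₁)) :
    (W₁'ᵀ * W₁' - W₂'ᵀ * W₂') - (W₁ᵀ * W₁ - W₂ᵀ * W₂)
      = η ^ 2 • (W₂ᵀ * Gᵀ * G * W₂ - W₁ᵀ * G * Gᵀ * W₁) ∧
    fro ((W₁'ᵀ * W₁' - W₂'ᵀ * W₂') - (W₁ᵀ * W₁ - W₂ᵀ * W₂))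
      ≤ η ^ 2 * (smaxSq W₁ + smaxSq W₂) * fro G ^ 2 :=
  stmt11_general n m h η W₁ W₂ G W₁' hW₁' W₂' hW₂'
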